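/- Let f be a formal Laurent series over ℂ such that f ∈ Ξ and g·f ∈ Ξ, where g is a power series (no pole) whose value g(0) may be nonzero, and where Ξ is the space of Laurent series whose even part is a power series. If moreover (g - g(0))·f ∈ Ξ, then f has a pole of order at most 1. -/

import Mathlib

/-- The space `Ξ` of Laurent series whose polar part is odd under `t ↦ -t`. -/
def Xi : Set (LaurentSeries ℂ) :=
  {f | ∀ n : ℤ, n < 0 → f.coeff n + (-1 : ℂ) ^ n * f.coeff n = 0}

/-
If `f ∈ Ξ` has a pole of order `≥ 2`, then its order `N` is odd because `Ξ` kills even polar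
coefficients. Writing `f = t^N·F` with `F(0) = f_N`, the coefficient of `(g - g(0))·f` at the
even negative index `N + 1` is the linear coefficient of `(g - g(0))·F`, namely `g'(0)·f_N ≠ 0`,
so `(g - g(0))·f ∉ Ξ`.
-/

namespace LaurentSeries

open HahnSeries PowerSeries

variable {R : Type*} [CommSemiring R]

theorem coeff_ofPowerSeries_mul_order_add (p : R⟦X⟧) (f : R⸨X⸩) (n : ℕ) :
    (ofPowerSeries ℤ R p * f).coeff (f.order + n) =
      PowerSeries.coeff n (p * f.powerSeriesPart) := by
  calc (ofPowerSeries ℤ R p * f).coeff (f.order + n)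
      = (single f.order 1 * ofPowerSeries ℤ R (p * f.powerSeriesPart)).coeff (n + f.order) := by
        rw [map_mul, mul_left_comm, single_order_mul_powerSeriesPart, add_comm]
    _ = PowerSeries.coeff n (p * f.powerSeriesPart) := by
        rw [coeff_single_mul_add, one_mul, coeff_coe_powerSeries]

theorem coeff_ofPowerSeries_mul_order_add_one {p : R⟦X⟧}
    (hp : constantCoeff p = 0) (f : R⸨X⸩) :
    (ofPowerSeries ℤ R p * f).coeff (f.order + 1) = PowerSeries.coeff 1 p * f.coeff f.order := by
  rw [← Nat.cast_one, coeff_ofPowerSeries_mul_order_add, coeff_one_mul, hp, mul_zero, add_zero,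
    ← coeff_zero_eq_constantCoeff_apply, powerSeriesPart_coeff, Nat.cast_zero, add_zero]

end LaurentSeries

theorem coeff_eq_zero_of_mem_Xi {f : LaurentSeries ℂ} (hf : f ∈ Xi) {n : ℤ} (hn : n < 0)
    (heven : Even n) : f.coeff n = 0 := by
  have h := hf n hn
  rw [heven.neg_one_zpow, one_mul, ← two_mul] at h
  exact (mul_eq_zero.1 h).resolve_left two_ne_zero

theorem odd_order_of_mem_Xi {f : LaurentSeries ℂ} (hf : f ∈ Xi) (hf0 : f ≠ 0)
    (hneg : f.order < 0) : Odd f.order :=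
  Int.not_even_iff_odd.1 fun heven =>
    hf0 (HahnSeries.coeff_order_eq_zero.1 <| coeff_eq_zero_of_mem_Xi hf hneg heven)

theorem pole_order_le_one_of_Xi_general (f : LaurentSeries ℂ) (g : PowerSeries ℂ)
    (hg : PowerSeries.coeff 1 g ≠ 0)
    (hf : f ∈ Xi)
    (hgf0 : (HahnSeries.ofPowerSeries ℤ ℂ
      (g - PowerSeries.C (PowerSeries.constantCoeff g))) * f ∈ Xi) :
    ∀ n : ℤ, n ≤ -2 → f.coeff n = 0 := by
  intro n hn
  by_contra hne
  have hf0 : f ≠ 0 := by rintro rfl; exact hne rfl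
  have horder : f.order ≤ -2 := (HahnSeries.order_le_of_coeff_ne_zero hne).trans hn
  obtain ⟨k, hk⟩ := odd_order_of_mem_Xi hf hf0 (by omega)
  have hshift := coeff_eq_zero_of_mem_Xi hgf0 (n := f.order + 1) (by omega) ⟨k + 1, by omega⟩
  rw [LaurentSeries.coeff_ofPowerSeries_mul_order_add_one (by simp)] at hshift
  simp [hg, hf0] at hshift

/-- If `f ∈ Ξ`, `g·f ∈ Ξ` and `(g - g(0))·f ∈ Ξ`, where `g` is a power series
whose shift `g - g(0)` has a simple zero (`g'(0) ≠ 0`), then `f` has a pole of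
order at most `1`. -/
theorem pole_order_le_one_of_Xi (f : LaurentSeries ℂ) (g : PowerSeries ℂ)
    (hg : PowerSeries.coeff 1 g ≠ 0)
    (hf : f ∈ Xi)
    (hgf : (HahnSeries.ofPowerSeries ℤ ℂ g) * f ∈ Xi)
    (hgf0 : (HahnSeries.ofPowerSeries ℤ ℂ
      (g - PowerSeries.C (PowerSeries.constantCoeff g))) * f ∈ Xi) :
    ∀ n : ℤ, n ≤ -2 → f.coeff n = 0 :=
  pole_order_le_one_of_Xi_general f g hg hf hgf0
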